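/- arXiv:1710.00070 — 4 statements merged into one kernel-verified Lean document; each statement's English description precedes it below -/
import Mathlib

section
/- Fix an infinite partition p ∈ (ω)^ω and k, ℓ ∈ ω. If O_i, i < ℓ, are open sets in (p)^k with (p)^k = ⋃_{i<ℓ} O_i, then there are open sets Ô_i in (ω)^k with ⋃_{i<ℓ} Ô_i = (ω)^k such that for every q ∈ (ω)^ω and i < ℓ: (q)^k ⊆ Ô_i if and only if (q ∘ p)^k ⊆ O_i. -/
open Set

/-- `f : ℕ → ℕ` is ordered: a value `i` can occur only after all `j < i` have occurred. -/
def IsOrderedFn (f : ℕ → ℕ) : Prop :=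
  ∀ n i, f n = i → ∀ j < i, ∃ m < n, f m = j

/-- `(ω)^k`: ordered surjections from `ω` onto `k`. -/
def OmegaPart (k : ℕ) : Set (ℕ → ℕ) :=
  {f | IsOrderedFn f ∧ (∀ n, f n < k) ∧ ∀ i < k, ∃ n, f n = i}

/-- `(ω)^ω`: ordered surjections from `ω` onto `ω` (infinite partitions). -/
def OmegaPartInf : Set (ℕ → ℕ) :=
  {f | IsOrderedFn f ∧ Function.Surjective f}

/-- `(p)^k`: the `k`-coarsenings of `p`. -/
def Coarsenings (p : ℕ → ℕ) (k : ℕ) : Set (ℕ → ℕ) :=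
  {q | q ∈ OmegaPart k ∧ ∀ n m, p n = p m → q n = q m}

/-- `(p)^ω`: the infinite coarsenings of `p`. -/
def CoarseningsInf (p : ℕ → ℕ) : Set (ℕ → ℕ) :=
  {q | q ∈ OmegaPartInf ∧ ∀ n m, p n = p m → q n = q m}

/-- `μ^x(i)`: the least `n` with `x n = i`. -/
noncomputable def mu (x : ℕ → ℕ) (i : ℕ) : ℕ := sInf {n | x n = i}

/-- `x ↾ n` as a finite string. -/
def restrictList (x : ℕ → ℕ) (n : ℕ) : List ℕ := (List.range n).map x

/-- The basic (cylinder) set `[σ]` of functions extending the finite string `σ`. -/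
def Cyl (σ : List ℕ) : Set (ℕ → ℕ) := {x | ∀ n < σ.length, x n = σ.getD n 0}

/-- A finite string is ordered. -/
def ListOrdered (σ : List ℕ) : Prop :=
  ∀ n < σ.length, ∀ j < σ.getD n 0, ∃ m < n, σ.getD m 0 = j

/-- `(ω)^k_fin`: ordered finite strings over `k` in which all `i < k` appear. -/
def OmegaPartFin (k : ℕ) : Set (List ℕ) :=
  {σ | ListOrdered σ ∧ (∀ a ∈ σ, a < k) ∧ ∀ i < k, i ∈ σ}

/-- Composition `σ ∘ τ` of finite strings: `(σ ∘ τ)(n) = σ(τ(n))`. -/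
def listComp (σ τ : List ℕ) : List ℕ := τ.map fun n => σ.getD n 0

/-- `σ'` is a `k`-coarsening of the finite string `τ`. -/
def IsListCoarsening (k : ℕ) (σ' τ : List ℕ) : Prop :=
  σ' ∈ OmegaPartFin k ∧ σ'.length = τ.length ∧
    ∀ n < τ.length, ∀ m < τ.length,
      τ.getD n 0 = τ.getD m 0 → σ'.getD n 0 = σ'.getD m 0

/-- The open set coded by a set `W` of finite strings. -/
def OpenFrom (W : Set (List ℕ)) : Set (ℕ → ℕ) := {x | ∃ σ ∈ W, x ∈ Cyl σ}

/-- Codes for partial recursive functionals with an oracle. -/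
inductive OracleCode : Type
  | oracle : OracleCode
  | zero : OracleCode
  | succ : OracleCode
  | left : OracleCode
  | right : OracleCode
  | pair : OracleCode → OracleCode → OracleCode
  | comp : OracleCode → OracleCode → OracleCode
  | prec : OracleCode → OracleCode → OracleCode
  | rfind' : OracleCode → OracleCode

/-- Evaluation of an oracle code with oracle `g`. -/
def OracleCode.evalo (g : ℕ →. ℕ) : OracleCode → ℕ →. ℕ
  | .oracle => g
  | .zero => fun _ => Part.some 0
  | .succ => fun n => Part.some (n + 1)
  | .left => fun n => Part.some (Nat.unpair n).1
  | .right => fun n => Part.some (Nat.unpair n).2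
  | .pair cf cg => fun n => Nat.pair <$> OracleCode.evalo g cf n <*> OracleCode.evalo g cg n
  | .comp cf cg => fun n => OracleCode.evalo g cg n >>= OracleCode.evalo g cf
  | .prec cf cg =>
      Nat.unpaired fun a n =>
        n.rec (OracleCode.evalo g cf a) fun y IH => do
          let i ← IH
          OracleCode.evalo g cg (Nat.pair a (Nat.pair y i))
  | .rfind' cf =>
      Nat.unpaired fun a m =>
        (Nat.rfind fun n =>
            (fun x => decide (x = 0)) <$> OracleCode.evalo g cf (Nat.pair a (n + m))).map (· + m)

/-- View a total function as a partial function. -/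
def toP (f : ℕ → ℕ) : ℕ →. ℕ := fun n => Part.some (f n)

/-- `f` is Turing reducible to `g`. -/
def TuringReducibleFun (f g : ℕ → ℕ) : Prop :=
  ∃ c : OracleCode, c.evalo (toP g) = toP f

open Classical in
/-- Characteristic function of a set of naturals. -/
noncomputable def chi (A : Set ℕ) : ℕ → ℕ := fun n => if n ∈ A then 1 else 0

/-- A numbering of oracle codes. -/
def OracleCode.encodeC : OracleCode → ℕ
  | .oracle => 0
  | .zero => 1
  | .succ => 2
  | .left => 3
  | .right => 4
  | .pair a b => Nat.pair a.encodeC b.encodeC * 4 + 5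
  | .comp a b => Nat.pair a.encodeC b.encodeC * 4 + 6
  | .prec a b => Nat.pair a.encodeC b.encodeC * 4 + 7
  | .rfind' a => a.encodeC * 4 + 8

/-- The Turing jump of (the characteristic function) `g`. -/
def JumpSet (g : ℕ → ℕ) : Set ℕ :=
  {n | ∃ c : OracleCode, ∃ m, n = Nat.pair c.encodeC m ∧ (c.evalo (toP g) m).Dom}

/-- `∅^{(n)}`: the iterated Turing jump of the empty set. -/
noncomputable def EmptyIter : ℕ → Set ℕ
  | 0 => (∅ : Set ℕ)
  | n + 1 => JumpSet (chi (EmptyIter n))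

/-- The clopen set coded by the leaf label `e`: `∅`, `univ`, `[τ_m]`, or its complement. -/
def leafSet (e : ℕ) : Set (ℕ → ℕ) :=
  if e = 0 then ∅
  else if e = 1 then Set.univ
  else if e % 2 = 0 then Cyl (Denumerable.ofNat (List ℕ) (e / 2 - 1))
  else (Cyl (Denumerable.ofNat (List ℕ) (e / 2 - 1)))ᶜ

/-- Evaluation of a normal-form Borel code of height `m` (alternating ∃/∀ over the
labelling function `f` on tuples, `true` for Σ, `false` for Π). -/
def NFEval : ℕ → Bool → (List ℕ → ℕ) → (ℕ → ℕ) → Prop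
  | 0, _, f, x => x ∈ leafSet (f [])
  | m + 1, true, f, x => ∃ t, NFEval m false (fun l => f (t :: l)) x
  | m + 1, false, f, x => ∀ t, NFEval m true (fun l => f (t :: l)) x

/-! The map `r ↦ r ∘ p` is continuous and carries `(q)^k` onto `(q ∘ p)^k` for every `q`; its
inverse sends `t` to `t ∘ μ^p`, which is again ordered because `μ^p` is strictly increasing.
So `Ô_i := {r ∈ (ω)^k | r ∘ p ∈ U_i}`, for open `U_i` with `O_i = U_i ∩ (p)^k`, does the job. -/

lemma apply_mu {p : ℕ → ℕ} (hp : Function.Surjective p) (i : ℕ) : p (mu p i) = i :=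
  Nat.sInf_mem (hp i)

lemma mu_apply_le (p : ℕ → ℕ) (n : ℕ) : mu p (p n) ≤ n := Nat.sInf_le rfl

lemma strictMono_mu {p : ℕ → ℕ} (hp : p ∈ OmegaPartInf) : StrictMono (mu p) := by
  intro j i hji
  obtain ⟨m, hm, hpm⟩ := hp.1 (mu p i) i (apply_mu hp.2 i) j hji
  exact (Nat.sInf_le hpm : mu p j ≤ m).trans_lt hm

lemma IsOrderedFn.comp {r p : ℕ → ℕ} (hr : IsOrderedFn r) (hp : IsOrderedFn p) :
    IsOrderedFn (r ∘ p) := by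
  rintro n i rfl j hj
  obtain ⟨m', hm', rfl⟩ := hr (p n) _ rfl j hj
  obtain ⟨m, hmn, rfl⟩ := hp n _ rfl m' hm'
  exact ⟨m, hmn, rfl⟩

lemma IsOrderedFn.comp_mu {t p : ℕ → ℕ} (ht : IsOrderedFn t) (hp : p ∈ OmegaPartInf)
    (htp : ∀ n m, p n = p m → t n = t m) : IsOrderedFn (t ∘ mu p) := by
  rintro i _ rfl j hj
  obtain ⟨m, hm, rfl⟩ := ht (mu p i) _ rfl j hj
  have hlt : p m < i := (strictMono_mu hp).lt_iff_lt.1 ((mu_apply_le p m).trans_lt hm)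
  exact ⟨p m, hlt, htp _ _ (apply_mu hp.2 (p m))⟩

lemma coarsenings_comp_subset (q p : ℕ → ℕ) (k : ℕ) :
    Coarsenings (q ∘ p) k ⊆ Coarsenings p k :=
  fun _ ht => ⟨ht.1, fun n m h => ht.2 n m (congrArg q h)⟩

lemma comp_mem_omegaPart {k : ℕ} {r p : ℕ → ℕ} (hr : r ∈ OmegaPart k) (hp : p ∈ OmegaPartInf) :
    r ∘ p ∈ OmegaPart k := by
  refine ⟨hr.1.comp hp.1, fun n => hr.2.1 (p n), fun i hi => ?_⟩
  obtain ⟨m, rfl⟩ := hr.2.2 i hi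
  obtain ⟨n, rfl⟩ := hp.2 m
  exact ⟨n, rfl⟩

lemma comp_mu_mem_omegaPart {k : ℕ} {t p : ℕ → ℕ} (ht : t ∈ Coarsenings p k)
    (hp : p ∈ OmegaPartInf) : t ∘ mu p ∈ OmegaPart k := by
  refine ⟨ht.1.1.comp_mu hp ht.2, fun i => ht.1.2.1 _, fun i hi => ?_⟩
  obtain ⟨n, rfl⟩ := ht.1.2.2 i hi
  exact ⟨p n, ht.2 _ _ (apply_mu hp.2 (p n))⟩

theorem image_comp_coarsenings {p : ℕ → ℕ} (hp : p ∈ OmegaPartInf) (q : ℕ → ℕ) (k : ℕ) :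
    (· ∘ p) '' Coarsenings q k = Coarsenings (q ∘ p) k := by
  apply Subset.antisymm
  · rintro _ ⟨r, hr, rfl⟩
    exact ⟨comp_mem_omegaPart hr.1 hp, fun n m h => hr.2 _ _ h⟩
  · intro t ht
    have htp : t ∈ Coarsenings p k := coarsenings_comp_subset q p k ht
    have hqmu : ∀ a, q (p (mu p a)) = q a := fun a => congrArg q (apply_mu hp.2 a)
    refine ⟨t ∘ mu p, ⟨comp_mu_mem_omegaPart htp hp, fun a b hab => ?_⟩, ?_⟩
    · exact ht.2 _ _ (by simp only [Function.comp_apply, hqmu, hab])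
    · exact funext fun n => htp.2 _ _ (apply_mu hp.2 (p n))

/-- transferring an open cover of `(p)^k` to an open cover of `(ω)^k`. -/
theorem stmt3 (k ℓ : ℕ) (p : ℕ → ℕ) (hp : p ∈ OmegaPartInf)
    (O : Fin ℓ → Set (ℕ → ℕ))
    (hopen : ∀ i, ∃ U : Set (ℕ → ℕ), IsOpen U ∧ O i = U ∩ Coarsenings p k)
    (hcover : Coarsenings p k ⊆ ⋃ i, O i) :
    ∃ Oh : Fin ℓ → Set (ℕ → ℕ),
      (∀ i, ∃ U : Set (ℕ → ℕ), IsOpen U ∧ Oh i = U ∩ OmegaPart k) ∧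
      OmegaPart k ⊆ ⋃ i, Oh i ∧
      ∀ q ∈ OmegaPartInf, ∀ i,
        (Coarsenings q k ⊆ Oh i ↔ Coarsenings (fun n => q (p n)) k ⊆ O i) := by
  choose U hU hOU using hopen
  have hcont : Continuous (· ∘ p : (ℕ → ℕ) → ℕ → ℕ) :=
    continuous_pi fun n => continuous_apply (p n)
  refine ⟨fun i => (· ∘ p) ⁻¹' U i ∩ OmegaPart k,
    fun i => ⟨_, (hU i).preimage hcont, rfl⟩, fun r hr => ?_, fun q _ i => ?_⟩
  · have hrp : r ∘ p ∈ Coarsenings p k :=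
      ⟨comp_mem_omegaPart hr hp, fun _ _ h => congrArg r h⟩
    obtain ⟨i, hi⟩ := mem_iUnion.1 (hcover hrp)
    rw [hOU i] at hi
    exact mem_iUnion.2 ⟨i, hi.1, hr⟩
  · have hq : Coarsenings q k ⊆ OmegaPart k := fun _ hr => hr.1
    change _ ↔ Coarsenings (q ∘ p) k ⊆ O i
    rw [hOU i, subset_inter_iff, subset_inter_iff, ← image_subset_iff,
      image_comp_coarsenings hp]
    simp only [hq, coarsenings_comp_subset, and_true]
end

section
/- Let A ⊆ ω and let f_A : ω → ω be strictly increasing with A ≡_T f_A such that every g dominating f_A computes A. Define R = {x ∈ (ω)^3 : f_A(μ^x(1)) ≤ μ^x(2)}. Then: (a) R and its complement are open and A-computable; (b) every p ∈ (ω)^ω homogeneous for the coloring (ω)^3 = R ∪ ¬R satisfies (p)^3 ⊆ R; and (c) every such homogeneous p computes A. -/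
open Set

/-- The coloring `R = {x ∈ (ω)^3 : f_A(μ^x(1)) ≤ μ^x(2)}`. -/
def Rset (fA : ℕ → ℕ) : Set (ℕ → ℕ) := {x ∈ OmegaPart 3 | fA (mu x 1) ≤ mu x 2}

/-!
Cutting an infinite partition `p` at its blocks `a < b` gives a 3-coarsening whose blocks `1`
and `2` start at `μ^p(a)` and `μ^p(b)`. Since `μ^p(b) ≥ b`, a large `b` puts such a cut into
`R`, so a homogeneous `p` lies on the `R` side; then the cut at `n + 1, n + 2` yields
`f_A(n) ≤ f_A(μ^p(n+1)) ≤ μ^p(n+2)`. Thus `n ↦ μ^p(n+2)`, which `p` computes by unbounded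
search, dominates `f_A` and so computes `A`. Openness holds because `μ^x(1)` and `μ^x(2)` can be
read off any prefix of `x` in which `1` and `2` occur.
-/

section Mu

variable {x : ℕ → ℕ} {i n : ℕ}

lemma apply_mu_s8 (h : ∃ n, x n = i) : x (mu x i) = i := Nat.sInf_mem h

lemma mu_le (h : x n = i) : mu x i ≤ n := Nat.sInf_le h

lemma apply_ne_of_lt_mu (h : n < mu x i) : x n ≠ i := fun hn => (mu_le hn).not_gt h

lemma mu_eq_of_forall_lt_ne (hn : x n = i) (hlt : ∀ m < n, x m ≠ i) : mu x i = n :=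
  (mu_le hn).antisymm <| not_lt.1 fun h => hlt _ h (apply_mu_s8 ⟨n, hn⟩)

namespace IsOrderedFn

lemma apply_lt_of_lt_mu (hx : IsOrderedFn x) (h : n < mu x i) : x n < i := by
  by_contra! hle
  obtain ⟨m, hmn, hm⟩ := hx n (x n) rfl i (hle.lt_of_ne' (apply_ne_of_lt_mu h))
  exact apply_ne_of_lt_mu (hmn.trans h) hm

lemma mu_lt_mu (hx : IsOrderedFn x) {j : ℕ} (hi : ∃ n, x n = i) (hj : j < i) :
    mu x j < mu x i := by
  obtain ⟨m, hm, hmj⟩ := hx (mu x i) i (apply_mu_s8 hi) j hj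
  exact (mu_le hmj).trans_lt hm

lemma self_le_mu (hx : IsOrderedFn x) (hs : Function.Surjective x) (i : ℕ) : i ≤ mu x i := by
  induction i with
  | zero => exact Nat.zero_le _
  | succ k ih => exact ih.trans_lt (hx.mu_lt_mu (hs (k + 1)) k.lt_succ_self)

end IsOrderedFn

end Mu

def threeCut (a b : ℕ) (v : ℕ) : ℕ := if v < a then 0 else if v < b then 1 else 2

section ThreeCut

variable {p : ℕ → ℕ} {a b : ℕ}

lemma exists_lt_threeCut_eq (ha : 0 < a) (hab : a < b) {v j : ℕ} (hj : j < threeCut a b v) :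
    ∃ w < v, threeCut a b w = j := by
  unfold threeCut at hj
  obtain rfl | rfl : j = 0 ∨ j = 1 := by split_ifs at hj <;> omega
  · exact ⟨0, by split_ifs at hj <;> omega, by simp [threeCut, ha]⟩
  · exact ⟨a, by split_ifs at hj <;> omega, by simp [threeCut, hab]⟩

lemma threeCut_comp_mem_coarsenings (hp : p ∈ OmegaPartInf) (ha : 0 < a) (hab : a < b) :
    threeCut a b ∘ p ∈ Coarsenings p 3 := by
  obtain ⟨hord, hsurj⟩ := hp
  refine ⟨⟨?_, fun n => ?_, fun i hi => ?_⟩, fun n m h => by simp only [Function.comp, h]⟩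
  · rintro n i rfl j hj
    obtain ⟨w, hw, rfl⟩ := exists_lt_threeCut_eq ha hab hj
    obtain ⟨m, hm, rfl⟩ := hord n (p n) rfl w hw
    exact ⟨m, hm, rfl⟩
  · simp only [Function.comp, threeCut]; split_ifs <;> omega
  · obtain ⟨v, rfl⟩ : ∃ v, threeCut a b v = i := by
      interval_cases i
      exacts [⟨0, by simp [threeCut, ha]⟩, ⟨a, by simp [threeCut, hab]⟩,
        ⟨b, by simp [threeCut, hab.le]⟩]
    obtain ⟨n, rfl⟩ := hsurj v
    exact ⟨n, rfl⟩

lemma mu_threeCut_comp_one (hp : IsOrderedFn p) (ha : ∃ n, p n = a) (hab : a < b) :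
    mu (threeCut a b ∘ p) 1 = mu p a :=
  mu_eq_of_forall_lt_ne (by simp [threeCut, apply_mu_s8 ha, hab]) fun m hm => by
    simp [threeCut, hp.apply_lt_of_lt_mu hm]

lemma mu_threeCut_comp_two (hp : IsOrderedFn p) (hb : ∃ n, p n = b) (hab : a < b) :
    mu (threeCut a b ∘ p) 2 = mu p b :=
  mu_eq_of_forall_lt_ne (by simp [threeCut, apply_mu_s8 hb, hab.le]) fun m hm => by
    have := hp.apply_lt_of_lt_mu hm
    simp only [Function.comp, threeCut]; split_ifs <;> omega

end ThreeCut

section Homogeneous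

variable {fA p : ℕ → ℕ}

lemma exists_mem_coarsenings_mem_rset (fA : ℕ → ℕ) (hp : p ∈ OmegaPartInf) :
    ∃ z ∈ Coarsenings p 3, z ∈ Rset fA := by
  have hab : 1 < fA (mu p 1) + 2 := by omega
  have hz := threeCut_comp_mem_coarsenings hp one_pos hab
  refine ⟨_, hz, hz.1, ?_⟩
  rw [mu_threeCut_comp_one hp.1 (hp.2 1) hab, mu_threeCut_comp_two hp.1 (hp.2 _) hab]
  exact (Nat.le_add_right _ 2).trans (hp.1.self_le_mu hp.2 _)

lemma coarsenings_subset_rset_of_homogeneous (hp : p ∈ OmegaPartInf)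
    (hom : Coarsenings p 3 ⊆ Rset fA ∨ Coarsenings p 3 ⊆ OmegaPart 3 \ Rset fA) :
    Coarsenings p 3 ⊆ Rset fA := by
  refine hom.resolve_right fun hc => ?_
  obtain ⟨z, hz, hzR⟩ := exists_mem_coarsenings_mem_rset fA hp
  exact (hc hz).2 hzR

lemma le_mu_add_two_of_coarsenings_subset_rset (hmono : Monotone fA) (hp : p ∈ OmegaPartInf)
    (hR : Coarsenings p 3 ⊆ Rset fA) (n : ℕ) : fA n ≤ mu p (n + 2) := by
  have hab : n + 1 < n + 2 := n.succ_lt_succ n.lt_succ_self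
  have hz := (hR (threeCut_comp_mem_coarsenings hp n.succ_pos hab)).2
  rw [mu_threeCut_comp_one hp.1 (hp.2 _) hab, mu_threeCut_comp_two hp.1 (hp.2 _) hab] at hz
  exact (hmono ((n.le_succ).trans (hp.1.self_le_mu hp.2 _))).trans hz

end Homogeneous

namespace OracleCode

def ofCode : Nat.Partrec.Code → OracleCode
  | .zero => .zero
  | .succ => .succ
  | .left => .left
  | .right => .right
  | .pair a b => .pair (ofCode a) (ofCode b)
  | .comp a b => .comp (ofCode a) (ofCode b)
  | .prec a b => .prec (ofCode a) (ofCode b)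
  | .rfind' a => .rfind' (ofCode a)

lemma evalo_ofCode (g : ℕ →. ℕ) (c : Nat.Partrec.Code) : (ofCode c).evalo g = c.eval := by
  induction c with
  | zero | succ | left | right => rfl
  | pair a b iha ihb | comp a b iha ihb | prec a b iha ihb =>
    simp only [ofCode, evalo, Nat.Partrec.Code.eval, iha, ihb]; rfl
  | rfind' a iha => simp only [ofCode, evalo, Nat.Partrec.Code.eval, iha]; rfl

def subst (o : OracleCode) : OracleCode → OracleCode
  | .oracle => o
  | .zero => .zero
  | .succ => .succ
  | .left => .left
  | .right => .right
  | .pair a b => .pair (subst o a) (subst o b)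
  | .comp a b => .comp (subst o a) (subst o b)
  | .prec a b => .prec (subst o a) (subst o b)
  | .rfind' a => .rfind' (subst o a)

lemma evalo_subst (g : ℕ →. ℕ) (o c : OracleCode) :
    (subst o c).evalo g = c.evalo (o.evalo g) := by
  induction c with
  | oracle | zero | succ | left | right => rfl
  | pair a b iha ihb | comp a b iha ihb | prec a b iha ihb =>
    simp only [subst, evalo, iha, ihb]; rfl
  | rfind' a iha => simp only [subst, evalo, iha]; rfl

end OracleCode

section TuringReducible

variable {f g h o : ℕ → ℕ}

lemma Computable.turingReducibleFun (hf : Computable f) (o : ℕ → ℕ) :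
    TuringReducibleFun f o := by
  obtain ⟨c, hc⟩ := Nat.Partrec.Code.exists_code.1 (Partrec.nat_iff.1 hf)
  exact ⟨.ofCode c, by rw [OracleCode.evalo_ofCode, hc]; rfl⟩

lemma TuringReducibleFun.refl (f : ℕ → ℕ) : TuringReducibleFun f f := ⟨.oracle, rfl⟩

lemma TuringReducibleFun.trans (hfg : TuringReducibleFun f g) (hgh : TuringReducibleFun g h) :
    TuringReducibleFun f h := by
  obtain ⟨c, hc⟩ := hfg
  obtain ⟨d, hd⟩ := hgh
  exact ⟨.subst d c, by rw [OracleCode.evalo_subst, hd, hc]⟩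

lemma TuringReducibleFun.comp (hf : TuringReducibleFun f o) (hg : TuringReducibleFun g o) :
    TuringReducibleFun (f ∘ g) o := by
  obtain ⟨c, hc⟩ := hf
  obtain ⟨d, hd⟩ := hg
  refine ⟨.comp c d, funext fun n => ?_⟩
  simp only [OracleCode.evalo, hc, hd]
  exact Part.bind_some _ _

lemma TuringReducibleFun.pair (hf : TuringReducibleFun f o) (hg : TuringReducibleFun g o) :
    TuringReducibleFun (fun n => Nat.pair (f n) (g n)) o := by
  obtain ⟨c, hc⟩ := hf
  obtain ⟨d, hd⟩ := hg
  refine ⟨.pair c d, funext fun n => ?_⟩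
  simp [OracleCode.evalo, hc, hd, toP, Seq.seq]

lemma TuringReducibleFun.find (hh : TuringReducibleFun h o)
    (hex : ∀ n, ∃ k, h (Nat.pair n k) = 0) :
    TuringReducibleFun (fun n => Nat.find (hex n)) o := by
  obtain ⟨c, hc⟩ := hh
  obtain ⟨d, hd⟩ :=
    (Primrec₂.natPair.comp Primrec.id (Primrec.const 0)).to_comp.turingReducibleFun o
  refine ⟨.comp (.rfind' c) d, funext fun n => ?_⟩
  simp only [OracleCode.evalo, hc, hd]
  rw [toP, Part.bind_eq_bind, Part.bind_some]
  simp only [Nat.unpaired, Nat.unpair_pair, id, add_zero, toP, Part.map_eq_map, Part.map_some]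
  rw [Part.map_id' fun _ => rfl]
  refine Part.eq_some_iff.2 (Nat.mem_rfind.2 ⟨?_, fun hm => ?_⟩)
  · simpa using Nat.find_spec (hex n)
  · simpa using Nat.find_min (hex n) hm

end TuringReducible

lemma turingReducibleFun_mu {p : ℕ → ℕ} (hs : Function.Surjective p) :
    TuringReducibleFun (mu p) p := by
  classical
  set G : ℕ → ℕ := fun m => if m.unpair.1 = m.unpair.2 then 0 else 1
  have hG : Computable G :=
    (Primrec.ite (PrimrecRel.comp Primrec.eq (Primrec.fst.comp Primrec.unpair)
      (Primrec.snd.comp Primrec.unpair)) (Primrec.const 0) (Primrec.const 1)).to_comp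
  have hfst : Computable fun m : ℕ => m.unpair.1 := Computable.fst.comp Computable.unpair
  have hsnd : Computable fun m : ℕ => m.unpair.2 := Computable.snd.comp Computable.unpair
  have hsearch : TuringReducibleFun (fun m => G (Nat.pair (p m.unpair.2) m.unpair.1)) p :=
    (hG.turingReducibleFun p).comp <|
      ((TuringReducibleFun.refl p).comp (hsnd.turingReducibleFun p)).pair
        (hfst.turingReducibleFun p)
  have hex (n : ℕ) :
      ∃ k, G (Nat.pair (p (Nat.pair n k).unpair.2) (Nat.pair n k).unpair.1) = 0 := by
    obtain ⟨k, hk⟩ := hs n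
    exact ⟨k, by simp [G, hk]⟩
  have hmu : mu p = fun n => Nat.find (hex n) := funext fun n => by
    refine mu_eq_of_forall_lt_ne ?_ fun m hm => ?_
    · simpa [G] using Nat.find_spec (hex n)
    · simpa [G] using Nat.find_min (hex n) hm
  rw [hmu]
  exact hsearch.find hex

section Cylinders

variable {x : ℕ → ℕ} {σ : List ℕ} {i : ℕ}

lemma mem_cyl_restrictList (x : ℕ → ℕ) (n : ℕ) : x ∈ Cyl (restrictList x n) := by
  intro m hm
  simp only [restrictList, List.length_map, List.length_range] at hm
  simp [restrictList, List.getD_eq_getElem?_getD, hm]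

lemma mem_restrictList_of_mu_lt (hi : ∃ n, x n = i) {n : ℕ} (h : mu x i < n) :
    i ∈ restrictList x n :=
  List.mem_map.2 ⟨mu x i, List.mem_range.2 h, apply_mu_s8 hi⟩

lemma mu_eq_idxOf (hx : x ∈ Cyl σ) (hi : i ∈ σ) : mu x i = σ.idxOf i := by
  have hlt : σ.idxOf i < σ.length := List.idxOf_lt_length_of_mem hi
  have hcyl : ∀ m (hm : m < σ.length), x m = σ[m] := fun m hm => by
    rw [hx m hm, List.getD_eq_getElem _ _ hm]
  refine mu_eq_of_forall_lt_ne ?_ fun m hm hxm => ?_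
  · rw [hcyl _ hlt, List.getElem_idxOf hlt]
  · have := List.not_of_lt_findIdx (p := (· == i)) hm
    simp [← hcyl _ (hm.trans hlt), hxm] at this

lemma exists_of_mem_cyl (hx : x ∈ Cyl σ) (hi : i ∈ σ) : ∃ n, x n = i := by
  have hlt : σ.idxOf i < σ.length := List.idxOf_lt_length_of_mem hi
  exact ⟨_, by rw [hx _ hlt, List.getD_eq_getElem _ _ hlt, List.getElem_idxOf hlt]⟩

lemma setOf_mu_eq_openFrom (Q : ℕ → ℕ → Prop) (i j : ℕ) :
    {x | (∃ n, x n = i) ∧ (∃ n, x n = j) ∧ Q (mu x i) (mu x j)} =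
      OpenFrom {σ | i ∈ σ ∧ j ∈ σ ∧ Q (σ.idxOf i) (σ.idxOf j)} := by
  ext x
  constructor
  · rintro ⟨hi, hj, hQ⟩
    set σ := restrictList x (max (mu x i) (mu x j) + 1)
    have hx : x ∈ Cyl σ := mem_cyl_restrictList x _
    have hiσ : i ∈ σ := mem_restrictList_of_mu_lt hi (by omega)
    have hjσ : j ∈ σ := mem_restrictList_of_mu_lt hj (by omega)
    exact ⟨σ, ⟨hiσ, hjσ, by rwa [← mu_eq_idxOf hx hiσ, ← mu_eq_idxOf hx hjσ]⟩, hx⟩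
  · rintro ⟨σ, ⟨hiσ, hjσ, hQ⟩, hx⟩
    refine ⟨exists_of_mem_cyl hx hiσ, exists_of_mem_cyl hx hjσ, ?_⟩
    rwa [mu_eq_idxOf hx hiσ, mu_eq_idxOf hx hjσ]

end Cylinders

lemma exists_turingReducibleFun_mem_iff {f o : ℕ → ℕ} (hf : TuringReducibleFun f o)
    {C : ℕ → ℕ → Prop} (hC : PrimrecRel C) (i j : ℕ) :
    ∃ h : ℕ → ℕ, TuringReducibleFun h o ∧ ∀ σ : List ℕ,
      σ ∈ {σ : List ℕ | i ∈ σ ∧ j ∈ σ ∧ C (f (σ.idxOf i)) (σ.idxOf j)} ↔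
        h (Encodable.encode σ) = 1 := by
  classical
  let σ (n : ℕ) : List ℕ := Denumerable.ofNat (List ℕ) n
  have hσ : Primrec σ := Primrec.ofNat _
  have hidx (k : ℕ) : Primrec fun n => (σ n).idxOf k := Primrec.list_idxOf.comp (.const k) hσ
  -- `F (pair n v)` decides membership of `σ n` given the single oracle value `v = f (idxOf i)`
  let F (m : ℕ) : ℕ :=
    if (σ m.unpair.1).idxOf i < (σ m.unpair.1).length ∧
        (σ m.unpair.1).idxOf j < (σ m.unpair.1).length ∧
        C m.unpair.2 ((σ m.unpair.1).idxOf j) then 1 else 0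
  have hF : Computable F := by
    have h1 : Primrec fun m : ℕ => m.unpair.1 := Primrec.fst.comp Primrec.unpair
    have h2 : Primrec fun m : ℕ => m.unpair.2 := Primrec.snd.comp Primrec.unpair
    have hlen : Primrec fun m : ℕ => (σ m.unpair.1).length :=
      Primrec.list_length.comp (hσ.comp h1)
    exact (Primrec.ite
      ((Primrec.nat_lt.comp ((hidx i).comp h1) hlen).and
        ((Primrec.nat_lt.comp ((hidx j).comp h1) hlen).and (hC.comp h2 ((hidx j).comp h1))))
      (Primrec.const 1) (Primrec.const 0)).to_comp
  refine ⟨F ∘ fun n => Nat.pair n (f ((σ n).idxOf i)),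
    (hF.turingReducibleFun o).comp <| (Computable.id.turingReducibleFun o).pair <|
      hf.comp ((hidx i).to_comp.turingReducibleFun o), fun τ => ?_⟩
  simp only [Function.comp, F, σ, Denumerable.ofNat_encode, Nat.unpair_pair,
    List.idxOf_lt_length_iff, Set.mem_ofPred_eq]
  split_ifs with h <;> simpa using h

lemma exists_openFrom_eq_sep_omegaPart_three {f o : ℕ → ℕ} (hf : TuringReducibleFun f o)
    {C : ℕ → ℕ → Prop} (hC : PrimrecRel C) :
    ∃ W : Set (List ℕ),
      (∃ h : ℕ → ℕ, TuringReducibleFun h o ∧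
        ∀ σ : List ℕ, σ ∈ W ↔ h (Encodable.encode σ) = 1) ∧
        {x ∈ OmegaPart 3 | C (f (mu x 1)) (mu x 2)} = OpenFrom W ∩ OmegaPart 3 := by
  refine ⟨_, exists_turingReducibleFun_mem_iff hf hC 1 2, ?_⟩
  rw [← setOf_mu_eq_openFrom (fun a b => C (f a) b)]
  ext x
  constructor
  · rintro ⟨hx, hC⟩
    exact ⟨⟨hx.2.2 1 (by norm_num), hx.2.2 2 (by norm_num), hC⟩, hx⟩
  · rintro ⟨⟨-, -, hC⟩, hx⟩
    exact ⟨hx, hC⟩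

lemma omegaPart_three_diff_rset (fA : ℕ → ℕ) :
    OmegaPart 3 \ Rset fA = {x ∈ OmegaPart 3 | mu x 2 < fA (mu x 1)} := by
  ext x
  simp only [Rset, Set.mem_sdiff, Set.mem_sep_iff, not_and, not_le]
  exact ⟨fun ⟨hx, h⟩ => ⟨hx, h hx⟩, fun ⟨hx, h⟩ => ⟨hx, fun _ => h⟩⟩

theorem stmt8_general (A : Set ℕ) (fA : ℕ → ℕ) (hmono : StrictMono fA)
    (hfA : TuringReducibleFun fA (chi A))
    (hdom : ∀ g : ℕ → ℕ, (∀ᶠ n in Filter.atTop, fA n ≤ g n) → TuringReducibleFun (chi A) g) :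
    -- (a) R and its complement are open, with A-computable open codes
    ((∃ W : Set (List ℕ),
        (∃ h : ℕ → ℕ, TuringReducibleFun h (chi A) ∧
          ∀ σ : List ℕ, σ ∈ W ↔ h (Encodable.encode σ) = 1) ∧
        Rset fA = OpenFrom W ∩ OmegaPart 3) ∧
     (∃ W : Set (List ℕ),
        (∃ h : ℕ → ℕ, TuringReducibleFun h (chi A) ∧
          ∀ σ : List ℕ, σ ∈ W ↔ h (Encodable.encode σ) = 1) ∧
        OmegaPart 3 \ Rset fA = OpenFrom W ∩ OmegaPart 3)) ∧
    -- (b) homogeneity must be on the R side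
    (∀ p ∈ OmegaPartInf,
      (Coarsenings p 3 ⊆ Rset fA ∨ Coarsenings p 3 ⊆ OmegaPart 3 \ Rset fA) →
      Coarsenings p 3 ⊆ Rset fA) ∧
    -- (c) every homogeneous partition computes A
    (∀ p ∈ OmegaPartInf,
      (Coarsenings p 3 ⊆ Rset fA ∨ Coarsenings p 3 ⊆ OmegaPart 3 \ Rset fA) →
      TuringReducibleFun (chi A) p) := by
  refine ⟨⟨exists_openFrom_eq_sep_omegaPart_three hfA Primrec.nat_le, ?_⟩,
    fun p hp hom => coarsenings_subset_rset_of_homogeneous hp hom, fun p hp hom => ?_⟩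
  · rw [omegaPart_three_diff_rset]
    exact exists_openFrom_eq_sep_omegaPart_three hfA Primrec.nat_lt.swap
  · have hR := coarsenings_subset_rset_of_homogeneous hp hom
    have hdominates : ∀ᶠ n in Filter.atTop, fA n ≤ (mu p ∘ (· + 2)) n :=
      .of_forall (le_mu_add_two_of_coarsenings_subset_rset hmono.monotone hp hR)
    have hshift : Computable (· + 2 : ℕ → ℕ) :=
      (Primrec.nat_add.comp Primrec.id (Primrec.const 2)).to_comp
    exact (hdom _ hdominates).trans <|
      (turingReducibleFun_mu hp.2).comp (hshift.turingReducibleFun p)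

/-- coding into the Dual Ramsey Theorem via a self-modulus. -/
theorem stmt8 (A : Set ℕ) (fA : ℕ → ℕ) (hmono : StrictMono fA)
    (hAf : TuringReducibleFun (chi A) fA) (hfA : TuringReducibleFun fA (chi A))
    (hdom : ∀ g : ℕ → ℕ, (∀ᶠ n in Filter.atTop, fA n ≤ g n) → TuringReducibleFun (chi A) g) :
    -- (a) R and its complement are open, with A-computable open codes
    ((∃ W : Set (List ℕ),
        (∃ h : ℕ → ℕ, TuringReducibleFun h (chi A) ∧
          ∀ σ : List ℕ, σ ∈ W ↔ h (Encodable.encode σ) = 1) ∧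
        Rset fA = OpenFrom W ∩ OmegaPart 3) ∧
     (∃ W : Set (List ℕ),
        (∃ h : ℕ → ℕ, TuringReducibleFun h (chi A) ∧
          ∀ σ : List ℕ, σ ∈ W ↔ h (Encodable.encode σ) = 1) ∧
        OmegaPart 3 \ Rset fA = OpenFrom W ∩ OmegaPart 3)) ∧
    -- (b) homogeneity must be on the R side
    (∀ p ∈ OmegaPartInf,
      (Coarsenings p 3 ⊆ Rset fA ∨ Coarsenings p 3 ⊆ OmegaPart 3 \ Rset fA) →
      Coarsenings p 3 ⊆ Rset fA) ∧
    -- (c) every homogeneous partition computes A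
    (∀ p ∈ OmegaPartInf,
      (Coarsenings p 3 ⊆ Rset fA ∨ Coarsenings p 3 ⊆ OmegaPart 3 \ Rset fA) →
      TuringReducibleFun (chi A) p) :=
  stmt8_general A fA hmono hfA hdom
end

section
/- Let R ⊆ ω × (ω)^2_fin be a computable code for an open subset of (ω)^2. Then there is a computable infinite partition p ∈ (ω)^ω such that either every 2-coarsening of p is in the open set R, or every 2-coarsening of p is in the complement of R. -/
open Set

/-!
If for some `t` the code lists no prefix of a binary string `0^(t+m) 1 ρ`, then no 2-coarsening of
the partition with blocks `{0, …, t}, {t+1}, {t+2}, …` lies in the open set, since each of them is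
such a string. Otherwise a computable search finds, for every length `b`, a binary string `0^b τ`
with a `1` in `τ` and a prefix listed by the code. Gluing these strings, the `1`s of the `i`-th one
forming block `i + 1` and all `0`s forming block `0`, gives a computable partition `p`. A
2-coarsening `q` of `p` sends block `0` to `0`; if block `i + 1` is the first block it sends to `1`,
then `q` extends the `i`-th string `0^b τ`, so it lies in the open set.
-/

theorem Primrec.list_replicate {α : Type*} [Primcodable α] :
    Primrec₂ (List.replicate : ℕ → α → List α) :=
  (Primrec.list_map (Primrec.list_range.comp Primrec.fst)
    (Primrec.snd.comp Primrec.fst).to₂).of_eq fun p => by simp [List.map_const']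

theorem Computable.exists_forall_eq_true {α β : Type*} [Primcodable α] [Denumerable β]
    {p : α → β → Bool} (hp : Computable₂ p) (h : ∀ a, ∃ b, p a b = true) :
    ∃ f : α → β, Computable f ∧ ∀ a, p a (f a) = true := by
  have h' : ∀ a, ∃ n, p a (Denumerable.ofNat β n) = true := fun a => by
    obtain ⟨b, hb⟩ := h a
    exact ⟨Encodable.encode b, by simpa using hb⟩
  refine ⟨fun a => Denumerable.ofNat β (Nat.find (h' a)), ?_, fun a => Nat.find_spec (h' a)⟩
  have hsearch : Partrec₂ fun a n => (p a (Denumerable.ofNat β n) : Part Bool) :=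
    (hp.comp Computable.fst ((Computable.ofNat β).comp Computable.snd)).to₂.partrec₂
  refine (Computable.ofNat β).comp (Partrec.of_eq_tot (Partrec.rfind hsearch) fun a => ?_)
  refine Nat.mem_rfind.2 ⟨by simpa using Nat.find_spec (h' a), fun hm => ?_⟩
  simpa using Nat.find_min (h' a) hm

theorem cyl_take_subset (τ : List ℕ) (n : ℕ) : Cyl τ ⊆ Cyl (τ.take n) := by
  intro x hx j hj
  rw [List.length_take] at hj
  rw [hx j (by omega), List.getD_eq_getElem?_getD, List.getD_eq_getElem?_getD,
    List.getElem?_take_of_lt (by omega)]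

theorem take_length_eq_of_mem_cyl {x : ℕ → ℕ} {σ τ : List ℕ} (hσ : x ∈ Cyl σ) (hτ : x ∈ Cyl τ)
    (hlen : σ.length ≤ τ.length) : τ.take σ.length = σ := by
  refine List.ext_getElem (by simp [hlen]) fun j h₁ h₂ => ?_
  have := (hτ j (by omega)).symm.trans (hσ j h₂)
  simpa [List.getD_eq_getElem, h₂, show j < τ.length by omega] using this

theorem IsOrderedFn.apply_zero {f : ℕ → ℕ} (hf : IsOrderedFn f) : f 0 = 0 := by
  by_contra hne
  obtain ⟨m, hm, -⟩ := hf 0 (f 0) rfl 0 (Nat.pos_of_ne_zero hne)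
  omega

theorem List.IsPrefix.getD_eq {α : Type*} {l₁ l₂ : List α} (h : l₁ <+: l₂) (d : α) {j : ℕ}
    (hj : j < l₁.length) : l₁.getD j d = l₂.getD j d := by
  rw [List.getD_eq_getElem _ _ hj, List.getD_eq_getElem _ _ (hj.trans_le h.length_le),
    h.getElem hj]

section BlockPartition

variable (next : ℕ → List ℕ)

/-- `glueBlocks next i` is the partition on `[0, blockStart next i)`: at the current length `b`
the string `next b` is appended, its `1`s forming block `i + 1` and its `0`s joining block `0`. -/
def glueBlocks : ℕ → List ℕ
  | 0 => [0]
  | i + 1 => glueBlocks i ++ (next (glueBlocks i).length).map (· * (i + 1))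

def blockPartition (j : ℕ) : ℕ := (glueBlocks next (j + 1)).getD j 0

def blockStart (i : ℕ) : ℕ := (glueBlocks next i).length

def blockLeader (i : ℕ) : ℕ := blockStart next i + (next (blockStart next i)).idxOf 1

theorem glueBlocks_prefix {i k : ℕ} (hik : i ≤ k) : glueBlocks next i <+: glueBlocks next k := by
  induction k, hik using Nat.le_induction with
  | base => exact List.prefix_refl _
  | succ k _ ih => exact ih.trans (List.prefix_append _ _)

theorem blockStart_succ (i : ℕ) :
    blockStart next (i + 1) = blockStart next i + (next (blockStart next i)).length := by
  simp [blockStart, glueBlocks]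

theorem getD_glueBlocks_succ_of_le {i j : ℕ} (hj : blockStart next i ≤ j) :
    (glueBlocks next (i + 1)).getD j 0 =
      (next (blockStart next i)).getD (j - blockStart next i) 0 * (i + 1) := by
  rw [glueBlocks, List.getD_append_right _ _ _ _ hj, blockStart, List.getD_eq_getElem?_getD,
    List.getD_eq_getElem?_getD, List.getElem?_map]
  cases (next (glueBlocks next i).length)[j - (glueBlocks next i).length]? <;> simp

variable {next}

theorem le_of_mem_glueBlocks (hbin : ∀ b, ∀ a ∈ next b, a ≤ 1) {i a : ℕ}
    (ha : a ∈ glueBlocks next i) : a ≤ i := by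
  induction i generalizing a with
  | zero => simp_all [glueBlocks]
  | succ i ih =>
    simp only [glueBlocks, List.mem_append, List.mem_map] at ha
    rcases ha with ha | ⟨u, hu, rfl⟩
    · exact (ih ha).trans i.le_succ
    · simpa using Nat.mul_le_mul_right (i + 1) (hbin _ u hu)

variable (hone : ∀ b, 1 ∈ next b)
include hone

theorem blockLeader_lt_blockStart_succ (i : ℕ) : blockLeader next i < blockStart next (i + 1) := by
  rw [blockLeader, blockStart_succ]
  exact Nat.add_lt_add_left (List.idxOf_lt_length_of_mem (hone _)) _

theorem blockStart_strictMono : StrictMono (blockStart next) :=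
  strictMono_nat_of_lt_succ fun i =>
    (Nat.le_add_right _ _).trans_lt (blockLeader_lt_blockStart_succ hone i)

theorem lt_blockStart (i : ℕ) : i < blockStart next i := by
  induction i with
  | zero => simp [blockStart, glueBlocks]
  | succ i ih => exact lt_of_le_of_lt ih (blockStart_strictMono hone (Nat.lt_succ_self i))

theorem blockPartition_eq_getD {i j : ℕ} (hj : j < blockStart next i) :
    blockPartition next j = (glueBlocks next i).getD j 0 := by
  have hj' : j < blockStart next (j + 1) := (Nat.lt_succ_self j).trans (lt_blockStart hone _)
  rw [blockPartition, (glueBlocks_prefix next (le_max_left (j + 1) i)).getD_eq 0 hj',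
    (glueBlocks_prefix next (le_max_right (j + 1) i)).getD_eq 0 hj]

theorem blockPartition_zero : blockPartition next 0 = 0 := by
  simp [blockPartition_eq_getD hone (lt_blockStart hone 0), glueBlocks]

theorem blockPartition_blockLeader (i : ℕ) : blockPartition next (blockLeader next i) = i + 1 := by
  rw [blockPartition_eq_getD hone (blockLeader_lt_blockStart_succ hone i), blockLeader,
    getD_glueBlocks_succ_of_le next (Nat.le_add_right _ _), Nat.add_sub_cancel_left,
    List.getD_eq_getElem _ _ (List.idxOf_lt_length_of_mem (hone _)), List.getElem_idxOf, one_mul]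

theorem coarsening_apply_eq_ite {q : ℕ → ℕ} (hq : q ∈ Coarsenings (blockPartition next) 2)
    {i j : ℕ} (hi : q (blockLeader next i) = 1) (hmin : ∀ k < i, q (blockLeader next k) ≠ 1)
    (hj : blockPartition next j ≤ i + 1) :
    q j = if blockPartition next j = i + 1 then 1 else 0 := by
  obtain ⟨⟨hqo, hq2, -⟩, hqp⟩ := hq
  rcases hpj : blockPartition next j with _ | k
  · rw [hqp j 0 (hpj.trans (blockPartition_zero hone).symm), hqo.apply_zero]
    rfl
  · rw [hqp j _ (hpj.trans (blockPartition_blockLeader hone k).symm)]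
    rcases (show k < i ∨ k = i by omega) with hk | rfl
    · have := hmin k hk
      have := hq2 (blockLeader next k)
      rw [if_neg (by omega)]
      omega
    · rw [hi, if_pos rfl]

variable (hbin : ∀ b, ∀ a ∈ next b, a ≤ 1)
include hbin

theorem blockPartition_le_of_lt {i j : ℕ} (hj : j < blockStart next i) :
    blockPartition next j ≤ i := by
  rw [blockPartition_eq_getD hone hj, List.getD_eq_getElem _ _ hj]
  exact le_of_mem_glueBlocks hbin (List.getElem_mem _)

theorem blockStart_le_of_blockPartition_eq {i j : ℕ} (h : blockPartition next j = i + 1) :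
    blockStart next i ≤ j := by
  by_contra hj
  have := blockPartition_le_of_lt hone hbin (not_le.1 hj)
  omega

theorem blockPartition_mem : blockPartition next ∈ OmegaPartInf := by
  refine ⟨fun n v hn j hj => ?_, fun v => ?_⟩
  · obtain ⟨i, rfl⟩ : ∃ i, v = i + 1 := ⟨v - 1, by omega⟩
    have hstart := blockStart_le_of_blockPartition_eq hone hbin hn
    cases j with
    | zero => exact ⟨0, (lt_blockStart hone i).trans_le hstart |>.trans_le' i.zero_le,
      blockPartition_zero hone⟩
    | succ k =>
      refine ⟨blockLeader next k, ?_, blockPartition_blockLeader hone k⟩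
      have := (blockStart_strictMono hone).monotone (show k + 1 ≤ i by omega)
      have := blockLeader_lt_blockStart_succ hone k
      omega
  · cases v with
    | zero => exact ⟨0, blockPartition_zero hone⟩
    | succ i => exact ⟨_, blockPartition_blockLeader hone i⟩

theorem getD_replicate_append_eq_ite {i j : ℕ} (hj : j < blockStart next (i + 1)) :
    (List.replicate (blockStart next i) 0 ++ next (blockStart next i)).getD j 0 =
      if blockPartition next j = i + 1 then 1 else 0 := by
  by_cases hji : j < blockStart next i
  · have := blockPartition_le_of_lt hone hbin hji
    rw [List.getD_append _ _ _ _ (by simpa using hji), List.getD_replicate (h := hji),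
      if_neg (by omega)]
  · rw [List.getD_append_right _ _ _ _ (by simpa using hji), List.length_replicate,
      blockPartition_eq_getD hone hj, getD_glueBlocks_succ_of_le next (not_lt.1 hji)]
    set u := (next (blockStart next i)).getD (j - blockStart next i) 0
    have hu : u ≤ 1 := by
      by_cases hlt : j - blockStart next i < (next (blockStart next i)).length
      · exact hbin _ _ (List.getD_eq_getElem _ _ hlt ▸ List.getElem_mem hlt)
      · exact (List.getD_eq_default _ _ (not_lt.1 hlt)).trans_le zero_le_one
    interval_cases u <;> simp

theorem exists_mem_cyl_of_mem_coarsenings {q : ℕ → ℕ}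
    (hq : q ∈ Coarsenings (blockPartition next) 2) :
    ∃ b, q ∈ Cyl (List.replicate b 0 ++ next b) := by
  have hex : ∃ i, q (blockLeader next i) = 1 := by
    obtain ⟨n, hn⟩ := hq.1.2.2 1 one_lt_two
    rcases hpn : blockPartition next n with _ | k
    · have := hq.2 n 0 (hpn.trans (blockPartition_zero hone).symm)
      rw [hq.1.1.apply_zero] at this
      omega
    · exact ⟨k, (hq.2 _ _ (blockPartition_blockLeader hone k |>.trans hpn.symm)).trans hn⟩
  refine ⟨blockStart next (Nat.find hex), fun j hj => ?_⟩
  have hj' : j < blockStart next (Nat.find hex + 1) := by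
    simpa [blockStart_succ] using hj
  rw [getD_replicate_append_eq_ite hone hbin hj',
    coarsening_apply_eq_ite hone hq (Nat.find_spec hex) (fun k hk => Nat.find_min hex hk)
      (blockPartition_le_of_lt hone hbin hj')]

end BlockPartition

theorem computable_blockPartition {next : ℕ → List ℕ} (hnext : Computable next) :
    Computable (blockPartition next) := by
  have hlabel : Primrec₂ fun (l : List ℕ) (v : ℕ) => l.map (· * (v + 1)) :=
    Primrec.list_map Primrec.fst
      (Primrec.nat_mul.comp Primrec.snd (Primrec.succ.comp (Primrec.snd.comp Primrec.fst))).to₂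
  have hstep : Computable₂ fun (_ : ℕ) (p : ℕ × List ℕ) =>
      p.2 ++ (next p.2.length).map (· * (p.1 + 1)) := by
    have hg : Computable fun p : ℕ × List ℕ => p.2 := Computable.snd
    refine (Computable.list_append.comp hg
      (hlabel.to_comp.comp (hnext.comp (Computable.list_length.comp hg)) Computable.fst)).comp
      Computable.snd |>.to₂
  have hglue : Computable (glueBlocks next) := by
    refine (Computable.nat_rec Computable.id (Computable.const [0]) hstep).of_eq fun i => ?_
    induction i with
    | zero => rfl
    | succ i ih => simp [glueBlocks, ← ih]
  exact (Primrec.list_getD 0).to_comp.comp (hglue.comp Computable.succ) Computable.id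

/-- Truncating `ρ` to `{0, 1}` makes every search candidate a binary string. -/
def unitBlock (m : ℕ) (ρ : List ℕ) : List ℕ := List.replicate m 0 ++ 1 :: ρ.map (min · 1)

theorem one_mem_unitBlock (m : ℕ) (ρ : List ℕ) : 1 ∈ unitBlock m ρ := by
  simp [unitBlock]

theorem le_one_of_mem_unitBlock {m a : ℕ} {ρ : List ℕ} (ha : a ∈ unitBlock m ρ) : a ≤ 1 := by
  simp only [unitBlock, List.mem_append, List.mem_replicate, List.mem_cons, List.mem_map] at ha
  omega

theorem replicate_append_unitBlock (t m : ℕ) (ρ : List ℕ) :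
    List.replicate t 0 ++ unitBlock m ρ = unitBlock (t + m) ρ := by
  rw [unitBlock, unitBlock, List.replicate_add, List.append_assoc]

theorem primrec_unitBlock : Primrec₂ unitBlock :=
  Primrec.list_append.comp (Primrec.list_replicate.comp Primrec.fst (Primrec.const 0))
    (Primrec.list_cons.comp (Primrec.const 1)
      (Primrec.list_map Primrec.snd (Primrec.nat_min.comp Primrec.snd (Primrec.const 1)).to₂))

theorem mem_cyl_unitBlock {x : ℕ → ℕ} (hx : ∀ j, x j < 2) {M : ℕ} (hbelow : ∀ j < M, x j = 0)
    (hM : x M = 1) (N : ℕ) : x ∈ Cyl (unitBlock M ((List.range N).map fun k => x (M + 1 + k))) := by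
  intro j hj
  simp only [unitBlock, List.length_append, List.length_replicate, List.length_cons,
    List.length_map, List.length_range] at hj
  rcases lt_trichotomy j M with hjM | rfl | hMj
  · rw [hbelow j hjM, unitBlock, List.getD_append _ _ _ _ (by simpa using hjM),
      List.getD_replicate (h := hjM)]
  · rw [hM, unitBlock, List.getD_append_right _ _ _ _ (by simp), List.length_replicate,
      Nat.sub_self, List.getD_cons_zero]
  · obtain ⟨k, rfl⟩ : ∃ k, j = M + 1 + k := ⟨j - (M + 1), by omega⟩
    have := hx (M + 1 + k)
    rw [unitBlock, List.getD_append_right _ _ _ _ (by simp; omega), List.length_replicate,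
      show M + 1 + k - M = k + 1 by omega, List.getD_cons_succ,
      List.getD_eq_getElem _ _ (by simp; omega), List.getElem_map, List.getElem_map,
      List.getElem_range]
    omega

/-- The candidate `(m, ρ, n)` witnesses that the code `c` lists a prefix of `0^(t+m) 1 ρ`. -/
def codesBlockPrefix (c : List ℕ → Bool) (t : ℕ) (a : ℕ × List ℕ × ℕ) : Bool :=
  c ((unitBlock (t + a.1) a.2.1).take a.2.2)

theorem computable_codesBlockPrefix {c : List ℕ → Bool} (hc : Computable c) :
    Computable₂ (codesBlockPrefix c) :=
  hc.comp (Primrec.list_take.to_comp.comp (Computable.snd.comp (Computable.snd.comp Computable.snd))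
    (primrec_unitBlock.to_comp.comp
      (Primrec.nat_add.to_comp.comp Computable.fst (Computable.fst.comp Computable.snd))
      (Computable.fst.comp (Computable.snd.comp Computable.snd)))) |>.to₂

theorem sub_mem_omegaPartInf (t : ℕ) : (fun j => j - t) ∈ OmegaPartInf := by
  refine ⟨fun n v (hn : n - t = v) j hj => ?_, fun v => ⟨v + t, by simp⟩⟩
  cases j with
  | zero => exact ⟨0, by omega, by simp⟩
  | succ k => exact ⟨k + 1 + t, by omega, by simp⟩

theorem coarsenings_sub_disjoint_openFrom {c : List ℕ → Bool} {t : ℕ}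
    (ht : ∀ a, codesBlockPrefix c t a ≠ true) :
    ∀ x ∈ Coarsenings (fun j => j - t) 2, x ∉ OpenFrom {σ | c σ = true} := by
  rintro x ⟨⟨hxo, hx2, hxs⟩, hxc⟩ ⟨σ, hσ, hxσ⟩
  have hex : ∃ M, x M = 1 := hxs 1 one_lt_two
  have hbelow : ∀ j < Nat.find hex, x j = 0 := fun j hj => by
    have := Nat.find_min hex hj
    have := hx2 j
    omega
  have htM : t < Nat.find hex := by
    by_contra hle
    have := (hxc (Nat.find hex) 0 (show Nat.find hex - t = 0 - t by omega)).trans hxo.apply_zero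
    have := Nat.find_spec hex
    omega
  have hτ := mem_cyl_unitBlock hx2 hbelow (Nat.find_spec hex) σ.length
  apply ht (Nat.find hex - t, _, σ.length)
  rw [codesBlockPrefix, Nat.add_sub_cancel' htM.le,
    take_length_eq_of_mem_cyl hxσ hτ (by simp [unitBlock]; omega)]
  exact hσ

theorem coarsenings_blockPartition_subset_openFrom {c : List ℕ → Bool} {f : ℕ → ℕ × List ℕ × ℕ}
    (hf : ∀ t, codesBlockPrefix c t (f t) = true) :
    Coarsenings (blockPartition fun b => unitBlock (f b).1 (f b).2.1) 2 ⊆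
      OpenFrom {σ | c σ = true} := by
  intro q hq
  obtain ⟨b, hb⟩ := exists_mem_cyl_of_mem_coarsenings (fun b => one_mem_unitBlock _ _)
    (fun b _ => le_one_of_mem_unitBlock) hq
  rw [replicate_append_unitBlock] at hb
  exact ⟨_, hf b, cyl_take_subset _ _ hb⟩

/-- every computable open code for a 2-coloring of `(ω)^2` has a
computable homogeneous infinite partition. -/
theorem stmt10 (c : List ℕ → Bool) (hc : Computable c) :
    ∃ p : ℕ → ℕ, Computable p ∧ p ∈ OmegaPartInf ∧
      (Coarsenings p 2 ⊆ OpenFrom {σ | c σ = true} ∨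
       ∀ x ∈ Coarsenings p 2, x ∉ OpenFrom {σ | c σ = true}) := by
  by_cases h : ∀ t, ∃ a, codesBlockPrefix c t a = true
  · obtain ⟨f, hf, hfc⟩ := Computable.exists_forall_eq_true (computable_codesBlockPrefix hc) h
    refine ⟨_, computable_blockPartition ?_,
      blockPartition_mem (fun b => one_mem_unitBlock _ _) (fun b _ => le_one_of_mem_unitBlock),
      Or.inl (coarsenings_blockPartition_subset_openFrom hfc)⟩
    exact primrec_unitBlock.to_comp.comp (Computable.fst.comp hf)
      (Computable.fst.comp (Computable.snd.comp hf))
  · push Not at h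
    obtain ⟨t, ht⟩ := h
    exact ⟨_, Primrec.nat_sub.to_comp.comp Computable.id (Computable.const t),
      sub_mem_omegaPartInf t, Or.inr (coarsenings_sub_disjoint_openFrom ht)⟩
end

section
/- Suppose for each k in a countable index set, U_k and V_k are open subsets of a Baire space X with U_k ∩ V_k = ∅, U_k ∪ V_k dense, and ⟨D_{i,k}⟩ dense open sets such that for every x ∈ ⋂_i D_{i,k}: x ∈ U_k implies x ∈ A_k and x ∈ V_k implies x ∉ A_k, where A_k ⊆ X. Let B = {x : ∃k, x ∉ A_k}. Define U = ⋃_k V_k and V = ⋃{basic open [σ] : every U_k is dense in [σ]}. Then U ∪ V is dense, and setting D_i (over pairs i = ⟨a,b⟩) to be D_{a,b} ∩ (U_b ∪ V_b): for every x ∈ ⋂_i D_i, x ∈ U implies x ∈ B and x ∈ V implies x ∉ B. -/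
open Set

/-- the inductive step producing a Baire approximation of
`B = {x : ∃ k, x ∉ A_k}` from Baire approximations of the `A_k`. -/
theorem stmt16 {X : Type*} [TopologicalSpace X] [BaireSpace X]
    (Bas : ℕ → Set X)
    (hBas : TopologicalSpace.IsTopologicalBasis (Set.range Bas))
    (U V : ℕ → Set X)
    (hUopen : ∀ k, IsOpen (U k)) (hVopen : ∀ k, IsOpen (V k))
    (hdisj : ∀ k, U k ∩ V k = ∅)
    (hUVdense : ∀ k, Dense (U k ∪ V k))
    (D : ℕ → ℕ → Set X)
    (hDopen : ∀ i k, IsOpen (D i k)) (hDdense : ∀ i k, Dense (D i k))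
    (A : ℕ → Set X)
    (happrox : ∀ k x, (∀ i, x ∈ D i k) → (x ∈ U k → x ∈ A k) ∧ (x ∈ V k → x ∉ A k)) :
    Dense ((⋃ k, V k) ∪
      ⋃ σ ∈ {σ : ℕ | ∀ k τ, Bas τ ⊆ Bas σ → (Bas τ).Nonempty → (U k ∩ Bas τ).Nonempty},
        Bas σ) ∧
    ∀ x, (∀ i k, x ∈ D i k ∩ (U k ∪ V k)) →
      ((x ∈ ⋃ k, V k → ∃ k, x ∉ A k) ∧
       (x ∈ ⋃ σ ∈ {σ : ℕ | ∀ k τ, Bas τ ⊆ Bas σ → (Bas τ).Nonempty → (U k ∩ Bas τ).Nonempty},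
          Bas σ → ∀ k, x ∈ A k)) := by
  constructor
  · rw [dense_iff_inter_open]
    rintro O hO ⟨x, hx⟩
    obtain ⟨v, ⟨σ, rfl⟩, hxv, hvO⟩ := hBas.exists_subset_of_mem_open hx hO
    by_cases hσ : ∀ k τ, Bas τ ⊆ Bas σ → (Bas τ).Nonempty → (U k ∩ Bas τ).Nonempty
    · exact ⟨x, hvO hxv, Or.inr (mem_biUnion hσ hxv)⟩
    · push_neg at hσ
      obtain ⟨k, τ, hsub, hne, hempty⟩ := hσ
      have hτopen : IsOpen (Bas τ) := hBas.isOpen ⟨τ, rfl⟩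
      obtain ⟨y, hyUV, hyτ⟩ := (hUVdense k).exists_mem_open hτopen hne
      rcases hyUV with hyU | hyV
      · exact (eq_empty_iff_forall_notMem.1 hempty y ⟨hyU, hyτ⟩).elim
      · exact ⟨y, hvO (hsub hyτ), Or.inl (mem_iUnion.2 ⟨k, hyV⟩)⟩
  · intro x hx
    constructor
    · intro hxU
      obtain ⟨k, hk⟩ := mem_iUnion.1 hxU
      exact ⟨k, (happrox k x (fun i => (hx i k).1)).2 hk⟩
    · intro hxV k
      obtain ⟨σ, hσ, hxσ⟩ := mem_iUnion₂.1 hxV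
      rcases (hx 0 k).2 with hU | hV
      · exact (happrox k x (fun i => (hx i k).1)).1 hU
      · exfalso
        have hopen : IsOpen (V k ∩ Bas σ) := (hVopen k).inter (hBas.isOpen ⟨σ, rfl⟩)
        obtain ⟨w, ⟨τ, rfl⟩, hxw, hwsub⟩ := hBas.exists_subset_of_mem_open (show x ∈ V k ∩ Bas σ from ⟨hV, hxσ⟩) hopen
        obtain ⟨z, hzU, hzτ⟩ := hσ k τ (fun y hy => (hwsub hy).2) ⟨x, hxw⟩
        have : z ∈ U k ∩ V k := ⟨hzU, (hwsub hzτ).1⟩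
        rw [hdisj k] at this; exact this
end
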